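/- Suppose λ₁ ≥ λ₂ ≥ … ≥ λ_d are real numbers with Σᵢ λᵢ < 0, and h is a real number with 0 ≤ h ≤ Σ_{λᵢ>0} λᵢ. Let k be the largest index such that Σ_{i=1}^k λᵢ ≥ h (with k = 0 if λ₁ < h), and assume k < d with λ_{k+1} < 0. Then the quantity d_μ = k + (h − Σ_{i=1}^k λᵢ)/|λ_{k+1}| satisfies d_μ < d. -/

import Mathlib

/-!
If `h ≤ Σ_{i<k} λᵢ`, the correction term `(h - Σ_{i<k} λᵢ)/|λ_{k+1}|` is nonpositive, so
`d_μ ≤ k < d`. Otherwise `k = 0` and `λ₁ < 0`; by monotonicity every exponent is negative,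
so the Ruelle bound forces `h = 0` and `d_μ = 0 < d`.
-/

open Finset

theorem sum_filter_pos_eq_zero_of_nonpos {ι M : Type*} [Fintype ι] [AddCommMonoid M]
    [LinearOrder M] {l : ι → M} (hl : ∀ i, l i ≤ 0) :
    ∑ i ∈ univ.filter (fun i => 0 < l i), l i = 0 := by
  rw [filter_false_of_mem fun i _ => (hl i).not_gt, sum_empty]

theorem eq_zero_of_le_sum_filter_pos {ι M : Type*} [Fintype ι] [AddCommMonoid M]
    [LinearOrder M] {l : ι → M} {h : M} (hl : ∀ i, l i ≤ 0) (hh0 : 0 ≤ h)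
    (hhR : h ≤ ∑ i ∈ univ.filter (fun i => 0 < l i), l i) :
    h = 0 := by
  rw [sum_filter_pos_eq_zero_of_nonpos hl] at hhR
  exact le_antisymm hhR hh0

theorem add_div_abs_le_of_le {k h S : ℝ} (a : ℝ) (hS : h ≤ S) : k + (h - S) / |a| ≤ k :=
  add_le_of_nonpos_right (div_nonpos_of_nonpos_of_nonneg (sub_nonpos.2 hS) (abs_nonneg a))

theorem ledrappier_young_dimension_lt_ambient_general {d : ℕ} (l : Fin d → ℝ) (h : ℝ)
    (hmono : ∀ i j : Fin d, i ≤ j → l j ≤ l i)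
    (hh0 : 0 ≤ h)
    (hhR : h ≤ ∑ i ∈ Finset.univ.filter (fun i : Fin d => 0 < l i), l i)
    (k : ℕ) (hkd : k < d)
    (hk : h ≤ ∑ i ∈ Finset.univ.filter (fun i : Fin d => (i : ℕ) < k), l i ∨ k = 0)
    (hneg : l ⟨k, hkd⟩ < 0) :
    (k : ℝ) +
        (h - ∑ i ∈ Finset.univ.filter (fun i : Fin d => (i : ℕ) < k), l i) /
          |l ⟨k, hkd⟩| < d := by
  rcases hk with hk | rfl
  · exact (add_div_abs_le_of_le _ hk).trans_lt (by exact_mod_cast hkd)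
  · have hl : ∀ i, l i ≤ 0 := fun i => (hmono ⟨0, hkd⟩ i (Nat.zero_le _)).trans hneg.le
    simp [eq_zero_of_le_sum_filter_pos hl hh0 hhR, hkd]

/-- Analytic core of the Ledrappier–Young dimension formula: for ordered Lyapunov
exponents `λ₁ ≥ … ≥ λ_d` with negative sum, metric entropy `0 ≤ h ≤ Σ_{λᵢ>0} λᵢ`,
and `k` the largest index with `Σ_{i≤k} λᵢ ≥ h` (with `k = 0` by convention if no such
index exists), if `k < d` and `λ_{k+1} < 0` then
`d_μ = k + (h − Σ_{i≤k} λᵢ)/|λ_{k+1}| < d`. -/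
theorem ledrappier_young_dimension_lt_ambient {d : ℕ} (l : Fin d → ℝ) (h : ℝ)
    (hmono : ∀ i j : Fin d, i ≤ j → l j ≤ l i)
    (hdiss : ∑ i, l i < 0)
    (hh0 : 0 ≤ h)
    (hhR : h ≤ ∑ i ∈ Finset.univ.filter (fun i : Fin d => 0 < l i), l i)
    (k : ℕ) (hkd : k < d)
    (hk : h ≤ ∑ i ∈ Finset.univ.filter (fun i : Fin d => (i : ℕ) < k), l i ∨ k = 0)
    (hkmax : ∀ m : ℕ, m ≤ d →
      h ≤ ∑ i ∈ Finset.univ.filter (fun i : Fin d => (i : ℕ) < m), l i → m ≤ k)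
    (hneg : l ⟨k, hkd⟩ < 0) :
    (k : ℝ) +
        (h - ∑ i ∈ Finset.univ.filter (fun i : Fin d => (i : ℕ) < k), l i) /
          |l ⟨k, hkd⟩| < d :=
  ledrappier_young_dimension_lt_ambient_general l h hmono hh0 hhR k hkd hk hneg
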